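/- Fix β' > 0, D > 0, κ > 0, x ∈ (0,1], and define δ_k as in the recursion δ_k = min( κ/(β'+Dk), (1/2)(x − Σ_{j<k} δ_j) ). Then the partial remainders x_k = x − Σ_{j=1}^k δ_j converge to 0, and there exists c > 0 with x_k ≤ c·2^{−k} for all k. -/

import Mathlib

/-!
Write `y k = x - ∑_{j ≤ k} δ_j`, so that `y (k+1) = y k - min (a k) (y k / 2)` with
`a k = κ / (β' + D (k+1))`. As long as the first branch of the min is active, `y` decreases by
`a k`; since `∑ a k` diverges like the harmonic series while `y` stays positive, the second branch
must become active at some step `K`. From then on it stays active, because `y` halves at each step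
while `a` decreases by a factor of at most two, so `y (K + m) = y K / 2^m`.
-/

open Filter

namespace HalvingRecursion

variable {a y : ℕ → ℝ} (hstep : ∀ n, y (n + 1) = y n - min (a n) (y n / 2))
include hstep

theorem pos (hy0 : 0 < y 0) (n : ℕ) : 0 < y n := by
  induction n with
  | zero => exact hy0
  | succ n ih => linarith [hstep n, min_le_right (a n) (y n / 2)]

theorem antitone (ha : ∀ n, 0 ≤ a n) (hy0 : 0 < y 0) : Antitone y := by
  refine antitone_nat_of_succ_le fun n => ?_
  have := le_min (ha n) (div_nonneg (pos hstep hy0 n).le zero_le_two)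
  linarith [hstep n]

theorem exists_half_le (ha : ∀ n, 0 ≤ a n) (ha_sum : ¬ Summable a) (hy0 : 0 < y 0) :
    ∃ K, y K / 2 ≤ a K := by
  by_contra! hlt
  have hy : ∀ n, y n = y 0 - ∑ i ∈ Finset.range n, a i := by
    intro n
    induction n with
    | zero => simp
    | succ n ih =>
      rw [hstep n, min_eq_left (hlt n).le, ih, Finset.sum_range_succ]
      ring
  obtain ⟨N, hN⟩ :=
    (tendsto_atTop.1 ((not_summable_iff_tendsto_nat_atTop_of_nonneg ha).1 ha_sum) (y 0)).exists
  linarith [hy N, pos hstep hy0 N]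

theorem half_le_succ (ha : ∀ n, a n ≤ 2 * a (n + 1)) {n : ℕ} (hn : y n / 2 ≤ a n) :
    y (n + 1) = y n / 2 ∧ y (n + 1) / 2 ≤ a (n + 1) := by
  have hy : y (n + 1) = y n / 2 := by rw [hstep n, min_eq_right hn]; ring
  exact ⟨hy, by linarith [ha n]⟩

theorem eq_div_two_pow (ha : ∀ n, a n ≤ 2 * a (n + 1)) {K : ℕ} (hK : y K / 2 ≤ a K) (m : ℕ) :
    y (K + m) = y K / 2 ^ m ∧ y (K + m) / 2 ≤ a (K + m) := by
  induction m with
  | zero => simpa using hK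
  | succ m ih =>
    obtain ⟨hy, hnext⟩ := half_le_succ hstep ha ih.2
    refine ⟨?_, hnext⟩
    rw [← add_assoc, hy, ih.1, pow_succ, div_div]

theorem le_div_two_pow (ha₀ : ∀ n, 0 ≤ a n) (ha_sum : ¬ Summable a)
    (ha : ∀ n, a n ≤ 2 * a (n + 1)) (hy0 : 0 < y 0) :
    ∃ c > 0, ∀ n, y n ≤ c / 2 ^ n := by
  obtain ⟨K, hK⟩ := exists_half_le hstep ha₀ ha_sum hy0
  have hanti := antitone hstep ha₀ hy0
  refine ⟨y 0 * 2 ^ K, by positivity, fun n => ?_⟩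
  rcases le_or_gt n K with hnK | hKn
  · rw [le_div_iff₀ (by positivity)]
    exact mul_le_mul (hanti (Nat.zero_le n)) (pow_le_pow_right₀ one_le_two hnK)
      (by positivity) hy0.le
  · obtain ⟨m, rfl⟩ := Nat.exists_eq_add_of_lt hKn
    calc y (K + (m + 1)) = y K / 2 ^ (m + 1) := (eq_div_two_pow hstep ha hK _).1
      _ ≤ y 0 / 2 ^ (m + 1) := by gcongr; exact hanti (Nat.zero_le K)
      _ = y 0 * 2 ^ K / 2 ^ (K + (m + 1)) := by
        rw [pow_add (2 : ℝ) K, mul_comm (y 0), mul_div_mul_left _ _ (by positivity)]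

end HalvingRecursion

theorem tendsto_zero_of_le_div_two_pow {y : ℕ → ℝ} (hy : ∀ n, 0 ≤ y n) {c : ℝ}
    (hc : ∀ n, y n ≤ c / 2 ^ n) : Tendsto y atTop (nhds 0) := by
  have hlim : Tendsto (fun n : ℕ => c * (1 / 2 : ℝ) ^ n) atTop (nhds (c * 0)) :=
    tendsto_const_nhds.mul (tendsto_pow_atTop_nhds_zero_of_lt_one (by norm_num) (by norm_num))
  simp only [mul_zero, one_div, inv_pow, ← div_eq_mul_inv] at hlim
  exact tendsto_of_tendsto_of_tendsto_of_le_of_le tendsto_const_nhds hlim hy hc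

section StepSize

variable {β D κ : ℝ} (hβ : 0 < β) (hD : 0 ≤ D)
include hβ hD

theorem not_summable_div_linear (hκ : 0 < κ) :
    ¬ Summable fun n : ℕ => κ / (β + D * ((n : ℝ) + 1)) := by
  intro hsum
  have hle : ∀ n : ℕ, κ / (β + D) * (1 / ((n : ℝ) + 1)) ≤ κ / (β + D * ((n : ℝ) + 1)) := by
    intro n
    rw [div_mul_div_comm, mul_one]
    gcongr
    nlinarith [n.cast_nonneg (α := ℝ)]
  have hharm : Summable fun n : ℕ => 1 / ((n : ℝ) + 1) :=
    ((hsum.of_nonneg_of_le (fun n => by positivity) hle).mul_left (κ / (β + D))⁻¹).congr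
      fun n => by field_simp
  exact Real.not_summable_one_div_natCast
    ((summable_nat_add_iff 1).1 (by simpa only [Nat.cast_add, Nat.cast_one] using hharm))

theorem div_linear_le_two_mul_succ (hκ : 0 ≤ κ) (n : ℕ) :
    κ / (β + D * ((n : ℝ) + 1)) ≤ 2 * (κ / (β + D * (((n + 1 : ℕ) : ℝ) + 1))) := by
  rw [mul_div_assoc', div_le_div_iff₀ (by positivity) (by positivity)]
  push_cast
  nlinarith [mul_nonneg hD (n.cast_nonneg (α := ℝ))]

end StepSize

theorem remainder_succ {β D κ x : ℝ} {d : ℕ → ℝ}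
    (hd : ∀ k : ℕ, 1 ≤ k →
      d k = min (κ / (β + D * (k : ℝ))) ((1 / 2) * (x - ∑ j ∈ Finset.Icc 1 (k - 1), d j)))
    (n : ℕ) :
    x - ∑ j ∈ Finset.Icc 1 (n + 1), d j =
      (x - ∑ j ∈ Finset.Icc 1 n, d j) -
        min (κ / (β + D * ((n : ℝ) + 1))) ((x - ∑ j ∈ Finset.Icc 1 n, d j) / 2) := by
  rw [Finset.sum_Icc_succ_top (Nat.le_add_left 1 n), hd (n + 1) (Nat.le_add_left 1 n),
    Nat.add_sub_cancel]
  push_cast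
  ring_nf

theorem stmt_14_general (β D κ x : ℝ) (hβ : 0 < β) (hD : 0 < D) (hκ : 0 < κ)
    (hx : 0 < x) (d : ℕ → ℝ)
    (hd : ∀ k : ℕ, 1 ≤ k →
      d k = min (κ / (β + D * (k : ℝ)))
        ((1 / 2) * (x - ∑ j ∈ Finset.Icc 1 (k - 1), d j))) :
    Tendsto (fun k : ℕ => x - ∑ j ∈ Finset.Icc 1 k, d j) atTop (nhds 0) ∧
    ∃ c > 0, ∀ k : ℕ, x - ∑ j ∈ Finset.Icc 1 k, d j ≤ c / 2 ^ k := by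
  set y : ℕ → ℝ := fun k => x - ∑ j ∈ Finset.Icc 1 k, d j
  have hstep : ∀ n, y (n + 1) = y n - min (κ / (β + D * ((n : ℝ) + 1))) (y n / 2) :=
    remainder_succ hd
  have hy0 : 0 < y 0 := by simpa [y] using hx
  obtain ⟨c, hc, hbound⟩ := HalvingRecursion.le_div_two_pow hstep
    (fun n => by positivity) (not_summable_div_linear hβ hD.le hκ)
    (div_linear_le_two_mul_succ hβ hD.le hκ.le) hy0
  exact ⟨tendsto_zero_of_le_div_two_pow (fun n => (HalvingRecursion.pos hstep hy0 n).le) hbound,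
    c, hc, hbound⟩

theorem stmt_14 (β D κ x : ℝ) (hβ : 0 < β) (hD : 0 < D) (hκ : 0 < κ)
    (hx : 0 < x) (hx1 : x ≤ 1) (d : ℕ → ℝ)
    (hd : ∀ k : ℕ, 1 ≤ k →
      d k = min (κ / (β + D * (k : ℝ)))
        ((1 / 2) * (x - ∑ j ∈ Finset.Icc 1 (k - 1), d j))) :
    Tendsto (fun k : ℕ => x - ∑ j ∈ Finset.Icc 1 k, d j) atTop (nhds 0) ∧
    ∃ c > 0, ∀ k : ℕ, x - ∑ j ∈ Finset.Icc 1 k, d j ≤ c / 2 ^ k :=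
  stmt_14_general β D κ x hβ hD hκ hx d hd
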